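/- Let R be the subgroup of VB_n generated by ρ_1, …, ρ_{n−1}. Then R acts by conjugation on the set { λ_{kl} : 1 ≤ k ≠ l ≤ n } (i.e., for every w ∈ R and every pair (k,l) with k ≠ l there is a pair (k',l') with k' ≠ l' such that w λ_{kl} w^{−1} = λ_{k'l'}), and this action is transitive: for any pairs (k,l) and (k',l') with k ≠ l and k' ≠ l' there exists w ∈ R with w λ_{kl} w^{−1} = λ_{k'l'}. -/

import Mathlib

/-! Conjugation by `ρ_i` permutes the `λ`'s as the transposition `(i i+1)` permutes their indices:
`ρ_i λ_{kl} ρ_i = λ_{s_i k, s_i l}`. For `k < l`, `λ_{kl}` is the conjugate of `c_k = λ_{k,k+1}` by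
`ρ_{l-1} ⋯ ρ_{k+1}`, and `λ_{lk}` the same conjugate of `c_k = λ_{k+1,k}`; so the formula reduces to
a few identities on three consecutive strands. These follow from `ρ_i² = 1`, the braid and
commutation relations of the `ρ`'s, and the mixed relation in the form
`σ_{k+1}⁻¹ = ρ_k ρ_{k+1} σ_k⁻¹ ρ_{k+1} ρ_k`. Hence `R` permutes the `λ`'s, and it does so
transitively because adjacent transpositions move any ordered pair of distinct indices
to `(1, 2)`. -/

/-- Generators of the virtual braid group `VB n`:
`Sum.inl i` is the braid generator σ_{i+1} and `Sum.inr i` is the virtual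
generator ρ_{i+1} (0-based index `i : Fin (n-1)`, paper indices are 1-based). -/
abbrev VBGen (n : ℕ) := Fin (n - 1) ⊕ Fin (n - 1)

/-- σ-letter in the free group. -/
def fS {n : ℕ} (i : Fin (n - 1)) : FreeGroup (VBGen n) := FreeGroup.of (Sum.inl i)

/-- ρ-letter in the free group. -/
def fR {n : ℕ} (i : Fin (n - 1)) : FreeGroup (VBGen n) := FreeGroup.of (Sum.inr i)

/-- The defining relators of the virtual braid group `VB_n`. -/
def vbRels (n : ℕ) : Set (FreeGroup (VBGen n)) :=
  {r | (∃ i j : Fin (n - 1), (i : ℕ) + 1 = (j : ℕ) ∧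
          r = fS i * fS j * fS i * (fS j * fS i * fS j)⁻¹) ∨
       (∃ i j : Fin (n - 1), (i : ℕ) + 2 ≤ (j : ℕ) ∧
          r = fS i * fS j * (fS j * fS i)⁻¹) ∨
       (∃ i j : Fin (n - 1), (i : ℕ) + 1 = (j : ℕ) ∧
          r = fR i * fR j * fR i * (fR j * fR i * fR j)⁻¹) ∨
       (∃ i j : Fin (n - 1), (i : ℕ) + 2 ≤ (j : ℕ) ∧
          r = fR i * fR j * (fR j * fR i)⁻¹) ∨
       (∃ i : Fin (n - 1), r = fR i * fR i) ∨
       (∃ i j : Fin (n - 1), ((i : ℕ) + 2 ≤ (j : ℕ) ∨ (j : ℕ) + 2 ≤ (i : ℕ)) ∧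
          r = fS i * fR j * (fR j * fS i)⁻¹) ∨
       (∃ i j : Fin (n - 1), (i : ℕ) + 1 = (j : ℕ) ∧
          r = fR i * fR j * fS i * (fS j * fR i * fR j)⁻¹)}

/-- The virtual braid group `VB_n` as a presented group. -/
abbrev VB (n : ℕ) := PresentedGroup (vbRels n)

/-- The generator σ_i of `VB n`, with the paper's 1-based index `1 ≤ i ≤ n-1`
(junk value `1` outside that range). -/
def sig {n : ℕ} (i : ℕ) : VB n :=
  if h : 1 ≤ i ∧ i ≤ n - 1 then PresentedGroup.of (Sum.inl ⟨i - 1, by omega⟩) else 1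

/-- The generator ρ_i of `VB n`, with the paper's 1-based index. -/
def rho {n : ℕ} (i : ℕ) : VB n :=
  if h : 1 ≤ i ∧ i ≤ n - 1 then PresentedGroup.of (Sum.inr ⟨i - 1, by omega⟩) else 1

/-- The ascending product ρ_a ρ_{a+1} ⋯ ρ_b (equal to `1` if `a > b`). -/
def asc {n : ℕ} (a b : ℕ) : VB n := ((List.range' a (b + 1 - a)).map (rho (n := n))).prod

/-- The descending product ρ_b ρ_{b-1} ⋯ ρ_a (equal to `1` if `a > b`). -/
def desc {n : ℕ} (a b : ℕ) : VB n :=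
  (((List.range' a (b + 1 - a)).map (rho (n := n))).reverse).prod

/-- λ_{k l} for 1-based indices `k ≠ l`:
for `k < l`, λ_{k l} = ρ_{l-1} ⋯ ρ_{k+1} (ρ_k σ_k⁻¹) ρ_{k+1} ⋯ ρ_{l-1};
for `l < k`, λ_{k l} = ρ_{k-1} ⋯ ρ_{l+1} (σ_l⁻¹ ρ_l) ρ_{l+1} ⋯ ρ_{k-1}. -/
def lam {n : ℕ} (k l : ℕ) : VB n :=
  if k < l then desc (k + 1) (l - 1) * (rho k * (sig k)⁻¹) * asc (k + 1) (l - 1)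
  else desc (l + 1) (k - 1) * ((sig l)⁻¹ * rho l) * asc (l + 1) (k - 1)

/-- `ν : VB_n → S_n` is characterized by sending both σ_i and ρ_i to the
transposition (i, i+1). -/
def IsNu {n : ℕ} (ν : VB n →* Equiv.Perm (Fin n)) : Prop :=
  ∀ i : Fin (n - 1),
    ν (PresentedGroup.of (Sum.inl i)) =
      Equiv.swap ⟨(i : ℕ), by have := i.isLt; omega⟩ ⟨(i : ℕ) + 1, by have := i.isLt; omega⟩ ∧
    ν (PresentedGroup.of (Sum.inr i)) =
      Equiv.swap ⟨(i : ℕ), by have := i.isLt; omega⟩ ⟨(i : ℕ) + 1, by have := i.isLt; omega⟩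

/-- The subgroup of `VB n` generated by the ρ-generators (a copy of `S_n`). -/
def Rsub (n : ℕ) : Subgroup (VB n) :=
  Subgroup.closure (Set.range fun i : Fin (n - 1) => (PresentedGroup.of (Sum.inr i) : VB n))

/-- The subgroup of `VB n` generated by the λ_{k l} with `1 ≤ k ≠ l ≤ m`;
for `m = n` this is the virtual pure braid group `VP_n`, and in general it is
the canonical copy of `VP_m` inside `VP_n`. -/
def VPsub (n : ℕ) (m : ℕ) : Subgroup (VB n) :=
  Subgroup.closure {x | ∃ k l : ℕ, 1 ≤ k ∧ k ≤ m ∧ 1 ≤ l ∧ l ≤ m ∧ k ≠ l ∧ x = lam k l}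

/-- `V_i^*`: the normal closure, inside the copy of `VP_{i+1}`, of the subgroup
`V_i = ⟨λ_{k,i+1}, λ_{i+1,k} : 1 ≤ k ≤ i⟩`. -/
def Vstar (n : ℕ) (i : ℕ) : Subgroup (VB n) :=
  Subgroup.closure {x | ∃ g ∈ VPsub n (i + 1), ∃ k : ℕ, 1 ≤ k ∧ k ≤ i ∧
    (x = g⁻¹ * lam k (i + 1) * g ∨ x = g⁻¹ * lam (i + 1) k * g)}

section Relations
variable {n : ℕ}

lemma mk_fS (i : Fin (n - 1)) : PresentedGroup.mk (vbRels n) (fS i) = sig (i + 1) := by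
  rw [sig, dif_pos ⟨by omega, by omega⟩]; rfl

lemma mk_fR (i : Fin (n - 1)) : PresentedGroup.mk (vbRels n) (fR i) = rho (i + 1) := by
  rw [rho, dif_pos ⟨by omega, by omega⟩]; rfl

lemma of_inr_eq_rho (i : Fin (n - 1)) : (PresentedGroup.of (Sum.inr i) : VB n) = rho (i + 1) :=
  mk_fR i

lemma sig_eq_one (i : ℕ) (h : ¬(1 ≤ i ∧ i ≤ n - 1)) : (sig i : VB n) = 1 := dif_neg h

lemma rho_eq_one (i : ℕ) (h : ¬(1 ≤ i ∧ i ≤ n - 1)) : (rho i : VB n) = 1 := dif_neg h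

lemma exists_fin_succ_eq {i : ℕ} (h : 1 ≤ i ∧ i ≤ n - 1) : ∃ j : Fin (n - 1), (j : ℕ) + 1 = i :=
  ⟨⟨i - 1, by omega⟩, by simp only; omega⟩

lemma rho_mul_self (i : ℕ) : (rho i : VB n) * rho i = 1 := by
  by_cases hi : 1 ≤ i ∧ i ≤ n - 1
  · obtain ⟨j, rfl⟩ := exists_fin_succ_eq hi
    simpa only [map_mul, mk_fR] using PresentedGroup.one_of_mem (rels := vbRels n)
      (Or.inr <| Or.inr <| Or.inr <| Or.inr <| Or.inl ⟨j, rfl⟩)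
  · rw [rho_eq_one i hi, mul_one]

lemma rho_mul_rho_mul (i : ℕ) (x : VB n) : rho i * (rho i * x) = x := by
  rw [← mul_assoc, rho_mul_self, one_mul]

lemma rho_inv (i : ℕ) : (rho i : VB n)⁻¹ = rho i :=
  inv_eq_of_mul_eq_one_right (rho_mul_self i)

lemma rho_braid {i : ℕ} (hi : 1 ≤ i) (hin : i + 1 ≤ n - 1) :
    (rho i : VB n) * rho (i + 1) * rho i = rho (i + 1) * rho i * rho (i + 1) := by
  obtain ⟨j, rfl⟩ := exists_fin_succ_eq (n := n) ⟨hi, by omega⟩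
  have := PresentedGroup.one_of_mem (rels := vbRels n)
    (Or.inr <| Or.inr <| Or.inl ⟨j, ⟨j + 1, by omega⟩, rfl, rfl⟩)
  simpa only [map_mul, map_inv, mk_fR, mul_inv_eq_one] using this

lemma commute_rho_rho {i j : ℕ} (h : i + 2 ≤ j ∨ j + 2 ≤ i) :
    Commute (rho i : VB n) (rho j) := by
  wlog hij : i + 2 ≤ j generalizing i j
  · exact (this h.symm (by omega)).symm
  by_cases hi : 1 ≤ i ∧ i ≤ n - 1
  · by_cases hj : 1 ≤ j ∧ j ≤ n - 1
    · obtain ⟨a, rfl⟩ := exists_fin_succ_eq hi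
      obtain ⟨b, rfl⟩ := exists_fin_succ_eq hj
      have := PresentedGroup.one_of_mem (rels := vbRels n)
        (Or.inr <| Or.inr <| Or.inr <| Or.inl ⟨a, b, by omega, rfl⟩)
      simp only [map_mul, map_inv, mk_fR, mul_inv_eq_one] at this
      exact this
    · rw [rho_eq_one j hj]; exact Commute.one_right _
  · rw [rho_eq_one i hi]; exact Commute.one_left _

lemma commute_sig_rho {i j : ℕ} (h : i + 2 ≤ j ∨ j + 2 ≤ i) :
    Commute (sig i : VB n) (rho j) := by
  by_cases hi : 1 ≤ i ∧ i ≤ n - 1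
  · by_cases hj : 1 ≤ j ∧ j ≤ n - 1
    · obtain ⟨a, rfl⟩ := exists_fin_succ_eq hi
      obtain ⟨b, rfl⟩ := exists_fin_succ_eq hj
      have := PresentedGroup.one_of_mem (rels := vbRels n)
        (Or.inr <| Or.inr <| Or.inr <| Or.inr <| Or.inr <| Or.inl ⟨a, b, by omega, rfl⟩)
      simp only [map_mul, map_inv, mk_fR, mk_fS, mul_inv_eq_one] at this
      exact this
    · rw [rho_eq_one j hj]; exact Commute.one_right _
  · rw [sig_eq_one i hi]; exact Commute.one_left _

lemma rho_rho_sig {i : ℕ} (hi : 1 ≤ i) (hin : i + 1 ≤ n - 1) :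
    (rho i : VB n) * rho (i + 1) * sig i = sig (i + 1) * rho i * rho (i + 1) := by
  obtain ⟨j, rfl⟩ := exists_fin_succ_eq (n := n) ⟨hi, by omega⟩
  have := PresentedGroup.one_of_mem (rels := vbRels n)
    (Or.inr <| Or.inr <| Or.inr <| Or.inr <| Or.inr <| Or.inr ⟨j, ⟨j + 1, by omega⟩, rfl, rfl⟩)
  simpa only [map_mul, map_inv, mk_fR, mk_fS, mul_inv_eq_one] using this

end Relations

section Conj
variable {G : Type*} [Group G]

lemma MulAut.conj_eq_self_of_commute {g x : G} (h : Commute g x) : MulAut.conj g x = x := by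
  rw [MulAut.conj_apply, h.eq, mul_inv_cancel_right]

lemma MulAut.conj_conj_of_commute {g a : G} (h : Commute g a) (x : G) :
    MulAut.conj g (MulAut.conj a x) = MulAut.conj a (MulAut.conj g x) := by
  rw [← MulAut.mul_apply, ← map_mul, h.eq, map_mul, MulAut.mul_apply]

lemma Commute.conj_right {g a x : G} (ha : Commute g a) (hx : Commute g x) :
    Commute g (MulAut.conj a x) := by
  rw [MulAut.conj_apply]
  exact (ha.mul_right hx).mul_right ha.inv_right

lemma conj_braid_of_involutions {u v s t : G} (hu : u * u = 1) (hv : v * v = 1)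
    (hbr : u * v * u = v * u * v) (ht : t = u * v * s * v * u) :
    u * (v * t) * u = v * (u * s) * v ∧ u * (t * v) * u = v * (s * u) * v := by
  have huvuv : u * v * u * v = v * u := by rw [hbr, mul_assoc (v * u), hv, mul_one]
  have hvuvu : v * u * v * u = u * v := by rw [← hbr, mul_assoc (u * v), hu, mul_one]
  subst ht
  constructor
  · calc u * (v * (u * v * s * v * u)) * u = u * v * u * v * s * v * (u * u) := by group
      _ = v * (u * s) * v := by rw [huvuv, hu]; group
  · calc u * (u * v * s * v * u * v) * u = (u * u) * v * s * (v * u * v * u) := by group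
      _ = v * (s * u) * v := by rw [hvuvu, hu]; group

end Conj

section Words
variable {n : ℕ}

lemma desc_eq_inv_asc (a b : ℕ) : (desc a b : VB n) = (asc a b)⁻¹ := by
  simp only [asc, desc, List.prod_inv_reverse, List.map_map, Function.comp_def, rho_inv]

lemma asc_eq_mul {a m b : ℕ} (ham : a ≤ m) (hmb : m ≤ b + 1) (hm : 0 < m) :
    (asc a b : VB n) = asc a (m - 1) * asc m b := by
  have hlen : b + 1 - a = (m - 1 + 1 - a) + (b + 1 - m) := by omega
  have hstart : a + 1 * (m - 1 + 1 - a) = m := by omega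
  rw [asc, asc, asc, hlen, ← List.range'_append, hstart, List.map_append, List.prod_append]

lemma desc_eq_mul {a m b : ℕ} (ham : a ≤ m) (hmb : m ≤ b + 1) (hm : 0 < m) :
    (desc a b : VB n) = desc m b * desc a (m - 1) := by
  simp only [desc_eq_inv_asc, asc_eq_mul ham hmb hm, mul_inv_rev]

lemma desc_self (a : ℕ) : (desc a a : VB n) = rho a := by
  simp [desc]

lemma desc_succ_self (a : ℕ) : (desc (a + 1) a : VB n) = 1 := by
  simp [desc]

lemma commute_rho_asc {j a b : ℕ} (h : j + 2 ≤ a ∨ b + 2 ≤ j) :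
    Commute (rho j : VB n) (asc a b) := by
  refine Commute.list_prod_right _ _ fun x hx => ?_
  obtain ⟨x, hmem, rfl⟩ := List.mem_map.1 hx
  obtain ⟨d, hd, rfl⟩ := List.mem_range'.1 hmem
  exact commute_rho_rho (by omega)

lemma commute_rho_desc {j a b : ℕ} (h : j + 2 ≤ a ∨ b + 2 ≤ j) :
    Commute (rho j : VB n) (desc a b) := by
  rw [desc_eq_inv_asc]
  exact (commute_rho_asc h).inv_right

lemma conj_rho_conj_rho (i : ℕ) (x : VB n) :
    MulAut.conj (rho i) (MulAut.conj (rho i) x) = x := by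
  rw [← MulAut.mul_apply, ← map_mul, rho_mul_self, map_one, MulAut.one_apply]

end Words

section LamOf
variable {n : ℕ}

/-- `ρ_{l-1} ⋯ ρ_{k+1} c_k ρ_{k+1} ⋯ ρ_{l-1}`: for `c_k = ρ_k σ_k⁻¹` this is `λ_{kl}` (`k < l`),
for `c_k = σ_k⁻¹ ρ_k` it is `λ_{lk}`. -/
def lamOf (c : ℕ → VB n) (k l : ℕ) : VB n := desc (k + 1) (l - 1) * c k * asc (k + 1) (l - 1)

/-- The properties of `c_k = λ_{k,k+1}` (or `λ_{k+1,k}`) on which the conjugation formula for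
`lamOf c` rests. -/
structure IsLamCore (c : ℕ → VB n) : Prop where
  commute_rho : ∀ {j k : ℕ}, j + 2 ≤ k ∨ k + 2 ≤ j → Commute (rho j) (c k)
  conj_rho : ∀ {k : ℕ}, 1 ≤ k → k + 1 ≤ n - 1 →
    MulAut.conj (rho k) (c (k + 1)) = MulAut.conj (rho (k + 1)) (c k)

variable {c : ℕ → VB n}

lemma lamOf_eq_conj (k l : ℕ) : lamOf c k l = MulAut.conj (desc (k + 1) (l - 1)) (c k) := by
  rw [lamOf, MulAut.conj_apply, desc_eq_inv_asc, inv_inv]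

lemma lamOf_eq_conj_lamOf {k m l : ℕ} (hkm : k < m) (hml : m ≤ l) :
    lamOf c k l = MulAut.conj (desc m (l - 1)) (lamOf c k m) := by
  rw [lamOf_eq_conj, lamOf_eq_conj, ← MulAut.mul_apply, ← map_mul,
    desc_eq_mul (m := m) (by omega) (by omega) (by omega)]

lemma lamOf_succ_right {k l : ℕ} (hkl : k < l) :
    lamOf c k (l + 1) = MulAut.conj (rho l) (lamOf c k l) := by
  rw [lamOf_eq_conj_lamOf hkl (by omega : l ≤ l + 1), Nat.add_sub_cancel, desc_self]

lemma lamOf_self_succ (k : ℕ) : lamOf c k (k + 1) = c k := by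
  rw [lamOf_eq_conj, Nat.add_sub_cancel, desc_succ_self, map_one, MulAut.one_apply]

lemma IsLamCore.commute_rho_lamOf (hc : IsLamCore c) {j k l : ℕ} (hkl : k < l)
    (h : j + 2 ≤ k ∨ l + 1 ≤ j) : Commute (rho j) (lamOf c k l) := by
  rw [lamOf_eq_conj]
  exact (commute_rho_desc (by omega)).conj_right (hc.commute_rho (by omega))

lemma conj_rho_lamOf_of_conj_rho_lamOf {i k k' m l : ℕ} (hkm : k < m) (hk'm : k' < m)
    (hml : m ≤ l) (him : i + 2 ≤ m)
    (h : MulAut.conj (rho i) (lamOf c k m) = lamOf c k' m) :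
    MulAut.conj (rho i) (lamOf c k l) = lamOf c k' l := by
  rw [lamOf_eq_conj_lamOf hkm hml, MulAut.conj_conj_of_commute (commute_rho_desc (by omega)), h,
    ← lamOf_eq_conj_lamOf hk'm hml]

lemma IsLamCore.conj_rho_lamOf (hc : IsLamCore c) {i k l : ℕ} (hi : 1 ≤ i) (hkl : k < l)
    (hln : l ≤ n) (hadj : ¬(i = k ∧ l = k + 1)) :
    MulAut.conj (rho i) (lamOf c k l) =
      lamOf c (Equiv.swap i (i + 1) k) (Equiv.swap i (i + 1) l) := by
  rcases (by omega : (i + 2 ≤ k ∨ l + 1 ≤ i) ∨ i + 1 = k ∨ i = k ∨ (k < i ∧ i + 2 ≤ l) ∨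
    i + 1 = l ∨ i = l) with hfar | rfl | rfl | hmid | hnext | rfl
  · rw [Equiv.swap_apply_of_ne_of_ne (by omega) (by omega),
      Equiv.swap_apply_of_ne_of_ne (by omega) (by omega)]
    exact MulAut.conj_eq_self_of_commute (hc.commute_rho_lamOf hkl hfar)
  · rw [Equiv.swap_apply_right, Equiv.swap_apply_of_ne_of_ne (by omega) (by omega)]
    refine conj_rho_lamOf_of_conj_rho_lamOf (m := i + 2) (by omega) (by omega) (by omega) le_rfl ?_
    rw [lamOf_self_succ, lamOf_succ_right (by omega), lamOf_self_succ, hc.conj_rho hi (by omega)]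
  · rw [Equiv.swap_apply_left, Equiv.swap_apply_of_ne_of_ne (by omega) (by omega)]
    refine conj_rho_lamOf_of_conj_rho_lamOf (m := i + 2) (by omega) (by omega) (by omega) le_rfl ?_
    rw [lamOf_succ_right (by omega), lamOf_self_succ, lamOf_self_succ, ← hc.conj_rho hi (by omega),
      conj_rho_conj_rho]
  · rw [Equiv.swap_apply_of_ne_of_ne (by omega) (by omega),
      Equiv.swap_apply_of_ne_of_ne (by omega) (by omega)]
    refine conj_rho_lamOf_of_conj_rho_lamOf (m := i + 2) (by omega) (by omega) (by omega) le_rfl ?_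
    have hfix : MulAut.conj (rho (i + 1)) (lamOf c k i) = lamOf c k i :=
      MulAut.conj_eq_self_of_commute (hc.commute_rho_lamOf hmid.1 (by omega))
    calc MulAut.conj (rho i) (lamOf c k (i + 2))
        = MulAut.conj (rho i * rho (i + 1) * rho i) (lamOf c k i) := by
          rw [lamOf_succ_right (by omega), lamOf_succ_right hmid.1]
          simp only [map_mul, MulAut.mul_apply]
      _ = MulAut.conj (rho (i + 1) * rho i * rho (i + 1)) (lamOf c k i) := by
          rw [rho_braid hi (by omega)]
      _ = lamOf c k (i + 2) := by
          rw [lamOf_succ_right (by omega), lamOf_succ_right hmid.1]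
          simp only [map_mul, MulAut.mul_apply, hfix]
  · obtain rfl := hnext
    have hki : k < i := by omega
    rw [Equiv.swap_apply_of_ne_of_ne (by omega) (by omega), Equiv.swap_apply_right,
      lamOf_succ_right hki, conj_rho_conj_rho]
  · rw [Equiv.swap_apply_of_ne_of_ne (by omega) (by omega), Equiv.swap_apply_left,
      lamOf_succ_right hkl]

end LamOf

section Lam
variable {n : ℕ}

lemma lam_eq_lamOf_of_lt {k l : ℕ} (h : k < l) :
    (lam k l : VB n) = lamOf (fun j => rho j * (sig j)⁻¹) k l :=
  if_pos h

lemma lam_eq_lamOf_of_gt {k l : ℕ} (h : l < k) :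
    (lam k l : VB n) = lamOf (fun j => (sig j)⁻¹ * rho j) l k :=
  if_neg (by omega)

lemma inv_sig_succ {k : ℕ} (hk : 1 ≤ k) (hkn : k + 1 ≤ n - 1) :
    (sig (k + 1) : VB n)⁻¹ = rho k * rho (k + 1) * (sig k)⁻¹ * rho (k + 1) * rho k := by
  have hsig : (sig (k + 1) : VB n) = rho k * rho (k + 1) * sig k * rho (k + 1) * rho k := by
    rw [rho_rho_sig hk hkn]
    simp only [mul_assoc, rho_mul_self, mul_one]
  rw [hsig]
  simp only [mul_inv_rev, rho_inv, mul_assoc]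

lemma isLamCore_rho_mul_inv_sig : IsLamCore (n := n) fun j => rho j * (sig j)⁻¹ where
  commute_rho h := (commute_rho_rho h).mul_right (commute_sig_rho h.symm).symm.inv_right
  conj_rho hk hkn := by
    simp only [MulAut.conj_apply, rho_inv]
    exact (conj_braid_of_involutions (rho_mul_self _) (rho_mul_self _) (rho_braid hk hkn)
      (inv_sig_succ hk hkn)).1

lemma isLamCore_inv_sig_mul_rho : IsLamCore (n := n) fun j => (sig j)⁻¹ * rho j where
  commute_rho h := (commute_sig_rho h.symm).symm.inv_right.mul_right (commute_rho_rho h)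
  conj_rho hk hkn := by
    simp only [MulAut.conj_apply, rho_inv]
    exact (conj_braid_of_involutions (rho_mul_self _) (rho_mul_self _) (rho_braid hk hkn)
      (inv_sig_succ hk hkn)).2

lemma swap_lt_swap {i k l : ℕ} (hkl : k < l) (hadj : ¬(i = k ∧ l = k + 1)) :
    Equiv.swap i (i + 1) k < Equiv.swap i (i + 1) l := by
  simp only [Equiv.swap_apply_def]
  split_ifs <;> omega

lemma conj_rho_lam {i k l : ℕ} (hi : 1 ≤ i) (hkn : k ≤ n) (hln : l ≤ n) (hkl : k ≠ l) :
    MulAut.conj (rho i) (lam k l : VB n) =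
      lam (Equiv.swap i (i + 1) k) (Equiv.swap i (i + 1) l) := by
  rcases hkl.lt_or_gt with h | h
  · by_cases hadj : i = k ∧ l = k + 1
    · obtain ⟨rfl, rfl⟩ := hadj
      rw [Equiv.swap_apply_left, Equiv.swap_apply_right, lam_eq_lamOf_of_lt h,
        lam_eq_lamOf_of_gt h, lamOf_self_succ, lamOf_self_succ]
      simp only [MulAut.conj_apply, rho_inv, rho_mul_rho_mul]
    · rw [lam_eq_lamOf_of_lt h, isLamCore_rho_mul_inv_sig.conj_rho_lamOf hi h hln hadj,
        lam_eq_lamOf_of_lt (swap_lt_swap h hadj)]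
  · by_cases hadj : i = l ∧ k = l + 1
    · obtain ⟨rfl, rfl⟩ := hadj
      rw [Equiv.swap_apply_left, Equiv.swap_apply_right, lam_eq_lamOf_of_lt h,
        lam_eq_lamOf_of_gt h, lamOf_self_succ, lamOf_self_succ]
      simp only [MulAut.conj_apply, rho_inv, mul_assoc, rho_mul_self, mul_one]
    · rw [lam_eq_lamOf_of_gt h, isLamCore_inv_sig_mul_rho.conj_rho_lamOf hi h hkn hadj,
        lam_eq_lamOf_of_gt (swap_lt_swap h hadj)]

end Lam

lemma swap_mem_Icc {n i k : ℕ} (hi : 1 ≤ i) (hin : i ≤ n - 1) (hk : 1 ≤ k) (hkn : k ≤ n) :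
    1 ≤ Equiv.swap i (i + 1) k ∧ Equiv.swap i (i + 1) k ≤ n := by
  simp only [Equiv.swap_apply_def]
  split_ifs <;> omega

lemma induction_on_distinct_pairs {n : ℕ} {P : ℕ → ℕ → Prop} (h12 : P 1 2)
    (hswap : ∀ i k l, 1 ≤ i → i ≤ n - 1 → 1 ≤ k → k ≤ n → 1 ≤ l → l ≤ n → k ≠ l →
      P (Equiv.swap i (i + 1) k) (Equiv.swap i (i + 1) l) → P k l)
    {k l : ℕ} (hk : 1 ≤ k) (hkn : k ≤ n) (hl : 1 ≤ l) (hln : l ≤ n) (hkl : k ≠ l) : P k l := by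
  induction hs : k + l using Nat.strong_induction_on generalizing k l with
  | _ s ih =>
  have step : ∀ i, 1 ≤ i → (i + 1 = k ∨ i + 1 = l) → i ≠ k → i ≠ l → P k l := by
    intro i hi hmove hk' hl'
    have hin : i ≤ n - 1 := by omega
    have hlt : Equiv.swap i (i + 1) k + Equiv.swap i (i + 1) l < s := by
      simp only [Equiv.swap_apply_def]
      split_ifs <;> omega
    exact hswap i k l hi hin hk hkn hl hln hkl <| ih _ hlt (swap_mem_Icc hi hin hk hkn).1
      (swap_mem_Icc hi hin hk hkn).2 (swap_mem_Icc hi hin hl hln).1 (swap_mem_Icc hi hin hl hln).2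
      ((Equiv.injective _).ne hkl) rfl
  rcases (by omega : (k = 1 ∧ l = 2) ∨ (k = 2 ∧ l = 1) ∨ k + 1 < l ∨ l + 1 < k ∨
    (2 ≤ k ∧ l = k + 1) ∨ (2 ≤ l ∧ k = l + 1)) with ⟨rfl, rfl⟩ | ⟨rfl, rfl⟩ | h | h | h | h
  · exact h12
  · exact hswap 1 2 1 le_rfl (by omega) (by omega) hkn le_rfl hln (by omega) h12
  · exact step (l - 1) (by omega) (by omega) (by omega) (by omega)
  · exact step (k - 1) (by omega) (by omega) (by omega) (by omega)
  · exact step (k - 1) (by omega) (by omega) (by omega) (by omega)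
  · exact step (l - 1) (by omega) (by omega) (by omega) (by omega)

section Action
variable {n : ℕ}

lemma rho_mem_Rsub {i : ℕ} (hi : 1 ≤ i) (hin : i ≤ n - 1) : (rho i : VB n) ∈ Rsub n := by
  obtain ⟨j, rfl⟩ := exists_fin_succ_eq (n := n) ⟨hi, hin⟩
  rw [← of_inr_eq_rho]
  exact Subgroup.subset_closure ⟨j, rfl⟩

def IsLam (n : ℕ) (x : VB n) : Prop :=
  ∃ k l, 1 ≤ k ∧ k ≤ n ∧ 1 ≤ l ∧ l ≤ n ∧ k ≠ l ∧ lam k l = x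

lemma IsLam.conj_rho {x : VB n} (hx : IsLam n x) {i : ℕ} (hi : 1 ≤ i) (hin : i ≤ n - 1) :
    IsLam n (MulAut.conj (rho i) x) := by
  obtain ⟨k, l, hk, hkn, hl, hln, hkl, rfl⟩ := hx
  exact ⟨_, _, (swap_mem_Icc hi hin hk hkn).1, (swap_mem_Icc hi hin hk hkn).2,
    (swap_mem_Icc hi hin hl hln).1, (swap_mem_Icc hi hin hl hln).2, (Equiv.injective _).ne hkl,
    (conj_rho_lam hi hkn hln hkl).symm⟩

lemma IsLam.conj {w : VB n} (hw : w ∈ Rsub n) {x : VB n} (hx : IsLam n x) :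
    IsLam n (MulAut.conj w x) := by
  induction hw using Subgroup.closure_induction_left generalizing x with
  | one => rwa [map_one, MulAut.one_apply]
  | mul_left _ hg _ _ ih =>
    obtain ⟨j, rfl⟩ := hg
    simp only [map_mul, MulAut.mul_apply, of_inr_eq_rho]
    exact (ih hx).conj_rho (by omega) (by omega)
  | inv_mul_cancel _ hg _ _ ih =>
    obtain ⟨j, rfl⟩ := hg
    simp only [map_mul, MulAut.mul_apply, of_inr_eq_rho, rho_inv]
    exact (ih hx).conj_rho (by omega) (by omega)

lemma exists_conj_lam_eq_lam_one_two {k l : ℕ} (hk : 1 ≤ k) (hkn : k ≤ n) (hl : 1 ≤ l)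
    (hln : l ≤ n) (hkl : k ≠ l) : ∃ w ∈ Rsub n, MulAut.conj w (lam k l) = lam 1 2 :=
  induction_on_distinct_pairs (P := fun k l => ∃ w ∈ Rsub n, MulAut.conj w (lam k l) = lam 1 2)
    ⟨1, one_mem _, by rw [map_one, MulAut.one_apply]⟩
    (fun i k l hi hin _ hkn _ hln hkl ⟨w, hw, h⟩ => ⟨w * rho i, mul_mem hw (rho_mem_Rsub hi hin),
      by rw [map_mul, MulAut.mul_apply, conj_rho_lam hi hkn hln hkl, h]⟩)
    hk hkn hl hln hkl

end Action

theorem stmt_6_general (n : ℕ) :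
    (∀ w ∈ Rsub n, ∀ k l : ℕ, 1 ≤ k → k ≤ n → 1 ≤ l → l ≤ n → k ≠ l →
      ∃ k' l' : ℕ, 1 ≤ k' ∧ k' ≤ n ∧ 1 ≤ l' ∧ l' ≤ n ∧ k' ≠ l' ∧
        w * lam k l * w⁻¹ = lam k' l') ∧
    (∀ k l k' l' : ℕ, 1 ≤ k → k ≤ n → 1 ≤ l → l ≤ n → k ≠ l →
      1 ≤ k' → k' ≤ n → 1 ≤ l' → l' ≤ n → k' ≠ l' →
      ∃ w ∈ Rsub n, w * lam k l * w⁻¹ = lam k' l') := by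
  simp only [← MulAut.conj_apply]
  constructor
  · intro w hw k l hk hkn hl hln hkl
    obtain ⟨k', l', hk', hkn', hl', hln', hkl', h⟩ :=
      IsLam.conj hw ⟨k, l, hk, hkn, hl, hln, hkl, rfl⟩
    exact ⟨k', l', hk', hkn', hl', hln', hkl', h.symm⟩
  · intro k l k' l' hk hkn hl hln hkl hk' hkn' hl' hln' hkl'
    obtain ⟨u, hu, hu12⟩ := exists_conj_lam_eq_lam_one_two hk hkn hl hln hkl
    obtain ⟨v, hv, hv12⟩ := exists_conj_lam_eq_lam_one_two hk' hkn' hl' hln' hkl'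
    refine ⟨v⁻¹ * u, mul_mem (inv_mem hv) hu, ?_⟩
    rw [map_mul, MulAut.mul_apply, hu12, ← hv12, map_inv, MulAut.inv_apply_self]

/-- the subgroup R = ⟨ρ_1, …, ρ_{n-1}⟩ of VB_n acts by
conjugation on the set { λ_{kl} : 1 ≤ k ≠ l ≤ n }, and this action is
transitive. -/
theorem stmt_6 (n : ℕ) (hn : 2 ≤ n) :
    (∀ w ∈ Rsub n, ∀ k l : ℕ, 1 ≤ k → k ≤ n → 1 ≤ l → l ≤ n → k ≠ l →
      ∃ k' l' : ℕ, 1 ≤ k' ∧ k' ≤ n ∧ 1 ≤ l' ∧ l' ≤ n ∧ k' ≠ l' ∧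
        w * lam k l * w⁻¹ = lam k' l') ∧
    (∀ k l k' l' : ℕ, 1 ≤ k → k ≤ n → 1 ≤ l → l ≤ n → k ≠ l →
      1 ≤ k' → k' ≤ n → 1 ≤ l' → l' ≤ n → k' ≠ l' →
      ∃ w ∈ Rsub n, w * lam k l * w⁻¹ = lam k' l') :=
  stmt_6_general n
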